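/- arXiv:1401.2836 — 2 statements merged into one kernel-verified Lean document; each statement's English description precedes it below -/
import Mathlib

section
/- Let S be an additively divisible semiring (commutative, possibly without neutral elements) and let T(S) = {a ∈ S : a has finite order} be nonempty. Then T(S) is an ideal of S (closed under addition, and s·t ∈ T(S) for every s ∈ S and t ∈ T(S)) and T(S) is additively divisible: for every t ∈ T(S) and n ≥ 1 there exists t' ∈ T(S) with n·t' = t. If moreover S is additively uniquely divisible, then t + t = t for every t ∈ T(S). -/
/-- `nmul n a` is the `n`-fold sum `a + ⋯ + a` (for `n ≥ 1`; `nmul 0 a = a` is junk). -/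
def nmul {S : Type*} [Add S] (n : ℕ) (a : S) : S :=
  Nat.rec a (fun _ b => b + a) (n - 1)

/-- `T(S)`: the set of elements of finite (additive) order. -/
def torsionSet (S : Type*) [Add S] : Set S :=
  {a | ∃ m n : ℕ, 1 ≤ m ∧ 1 ≤ n ∧ m ≠ n ∧ nmul m a = nmul n a}

/-!
Adjoining a zero turns the additive semigroup `S` into a monoid in which `nmul n a` is `n • a`.
An element of finite order satisfies `(m + d) • a = m • a` for some `m, d ≥ 1`, hence
`(k + i * d) • a = k • a` for all `k ≥ m`; with a common period `d * d'` this gives closure under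
addition, and for `k = m * d` it gives `k • (t + t) = (k + k) • t = k • t`, so unique
divisibility forces `t + t = t`. Closure under multiplication and divisibility inside `T(S)` only
need `s * (n • t) = n • (s * t)` and `m • (n • b) = (m * n) • b`.
-/

theorem add_mul_nsmul_eq_of_add_nsmul_eq {M : Type*} [AddMonoid M] {x : M} {m d k : ℕ}
    (h : (m + d) • x = m • x) (hk : m ≤ k) (i : ℕ) : (k + i * d) • x = k • x := by
  have period : ∀ n, m ≤ n → (n + d) • x = n • x := fun n hn => by
    obtain ⟨j, rfl⟩ := Nat.exists_eq_add_of_le hn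
    rw [add_right_comm, add_nsmul, h, ← add_nsmul]
  induction i with
  | zero => simp
  | succ i ih => rw [add_one_mul, ← add_assoc, period _ (by omega), ih]

section AddSemigroup

variable {S : Type*} [AddSemigroup S]

theorem coe_nmul (a : S) {n : ℕ} (hn : 1 ≤ n) :
    ((nmul n a : S) : WithZero S) = n • (a : WithZero S) := by
  obtain ⟨k, rfl⟩ := Nat.exists_eq_add_of_le' hn
  clear hn
  induction k with
  | zero => simp [nmul]
  | succ k ih =>
    change ((nmul (k + 1) a + a : S) : WithZero S) = _
    rw [WithZero.coe_add, ih, ← succ_nsmul]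

theorem nmul_eq_nmul_iff {a b : S} {m n : ℕ} (hm : 1 ≤ m) (hn : 1 ≤ n) :
    nmul m a = nmul n b ↔ m • (a : WithZero S) = n • (b : WithZero S) := by
  rw [← coe_nmul a hm, ← coe_nmul b hn, WithZero.coe_inj]

theorem nmul_nmul (a : S) {m n : ℕ} (hm : 1 ≤ m) (hn : 1 ≤ n) :
    nmul m (nmul n a) = nmul (m * n) a := by
  rw [nmul_eq_nmul_iff hm (Nat.mul_pos hm hn), coe_nmul a hn, mul_comm, mul_nsmul]

theorem mul_nmul [Mul S] [LeftDistribClass S] (s t : S) {n : ℕ} (hn : 1 ≤ n) :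
    s * nmul n t = nmul n (s * t) := by
  obtain ⟨k, rfl⟩ := Nat.exists_eq_add_of_le' hn
  clear hn
  induction k with
  | zero => rfl
  | succ k ih =>
    change s * (nmul (k + 1) t + t) = nmul (k + 1) (s * t) + s * t
    rw [mul_add, ih]

theorem mem_torsionSet_iff {a : S} :
    a ∈ torsionSet S ↔
      ∃ m d : ℕ, 1 ≤ m ∧ 1 ≤ d ∧ (m + d) • (a : WithZero S) = m • (a : WithZero S) := by
  constructor
  · rintro ⟨m, n, hm, hn, hmn, h⟩
    rw [nmul_eq_nmul_iff hm hn] at h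
    rcases Nat.lt_or_gt_of_ne hmn with hlt | hlt
    · exact ⟨m, n - m, hm, by omega, by rw [Nat.add_sub_cancel' hlt.le, h]⟩
    · exact ⟨n, m - n, hn, by omega, by rw [Nat.add_sub_cancel' hlt.le, h]⟩
  · rintro ⟨m, d, hm, hd, h⟩
    exact ⟨m + d, m, by omega, hm, by omega, (nmul_eq_nmul_iff (by omega) hm).2 h⟩

theorem mul_mem_torsionSet [Mul S] [LeftDistribClass S] (s : S) {t : S}
    (ht : t ∈ torsionSet S) : s * t ∈ torsionSet S := by
  obtain ⟨m, n, hm, hn, hmn, h⟩ := ht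
  exact ⟨m, n, hm, hn, hmn, by rw [← mul_nmul s t hm, ← mul_nmul s t hn, h]⟩

theorem exists_nmul_eq_of_mem_torsionSet
    (hdiv : ∀ a : S, ∀ n : ℕ, 1 ≤ n → ∃ b : S, nmul n b = a)
    {t : S} (ht : t ∈ torsionSet S) {n : ℕ} (hn : 1 ≤ n) :
    ∃ t' ∈ torsionSet S, nmul n t' = t := by
  obtain ⟨b, rfl⟩ := hdiv t n hn
  obtain ⟨p, q, hp, hq, hpq, h⟩ := ht
  refine ⟨b, ⟨p * n, q * n, Nat.mul_pos hp hn, Nat.mul_pos hq hn, ?_, ?_⟩, rfl⟩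
  · exact fun h' => hpq (Nat.eq_of_mul_eq_mul_right hn h')
  · rw [← nmul_nmul b hp hn, ← nmul_nmul b hq hn, h]

end AddSemigroup

section AddCommSemigroup

variable {S : Type*} [AddCommSemigroup S]

theorem add_mem_torsionSet {a b : S} (ha : a ∈ torsionSet S) (hb : b ∈ torsionSet S) :
    a + b ∈ torsionSet S := by
  obtain ⟨m, d, hm, hd, ha⟩ := mem_torsionSet_iff.1 ha
  obtain ⟨m', d', hm', hd', hb⟩ := mem_torsionSet_iff.1 hb
  refine mem_torsionSet_iff.2 ⟨max m m', d * d', by omega, Nat.mul_pos hd hd', ?_⟩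
  rw [WithZero.coe_add, nsmul_add, nsmul_add,
    add_mul_nsmul_eq_of_add_nsmul_eq hb (le_max_right m m'),
    mul_comm, add_mul_nsmul_eq_of_add_nsmul_eq ha (le_max_left m m')]

theorem add_self_of_mem_torsionSet
    (huniq : ∀ a : S, ∀ n : ℕ, 1 ≤ n → ∃! b : S, nmul n b = a)
    {t : S} (ht : t ∈ torsionSet S) : t + t = t := by
  obtain ⟨m, d, hm, hd, h⟩ := mem_torsionSet_iff.1 ht
  have hk : 1 ≤ m * d := Nat.mul_pos hm hd
  have double : nmul (m * d) (t + t) = nmul (m * d) t := by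
    rw [nmul_eq_nmul_iff hk hk, WithZero.coe_add, nsmul_add, ← add_nsmul,
      add_mul_nsmul_eq_of_add_nsmul_eq h (Nat.le_mul_of_pos_right m hd) m]
  exact (huniq _ _ hk).unique double rfl

end AddCommSemigroup

theorem stmt_7_general {S : Type*} [AddCommSemigroup S] [CommSemigroup S]
    (hdl : ∀ a b c : S, a * (b + c) = a * b + a * c)
    (hdiv : ∀ a : S, ∀ n : ℕ, 1 ≤ n → ∃ b : S, nmul n b = a) :
    ((∀ a ∈ torsionSet S, ∀ b ∈ torsionSet S, a + b ∈ torsionSet S) ∧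
     (∀ s : S, ∀ t ∈ torsionSet S, s * t ∈ torsionSet S) ∧
     (∀ t ∈ torsionSet S, ∀ n : ℕ, 1 ≤ n → ∃ t' ∈ torsionSet S, nmul n t' = t)) ∧
    ((∀ a : S, ∀ n : ℕ, 1 ≤ n → ∃! b : S, nmul n b = a) →
      ∀ t ∈ torsionSet S, t + t = t) := by
  have : LeftDistribClass S := ⟨hdl⟩
  exact ⟨⟨fun _ ha _ hb => add_mem_torsionSet ha hb, fun s _ ht => mul_mem_torsionSet s ht,
    fun _ ht _ hn => exists_nmul_eq_of_mem_torsionSet hdiv ht hn⟩,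
    fun huniq _ ht => add_self_of_mem_torsionSet huniq ht⟩

theorem stmt_7 {S : Type*} [AddCommSemigroup S] [CommSemigroup S]
    (hdl : ∀ a b c : S, a * (b + c) = a * b + a * c)
    (hdr : ∀ a b c : S, (a + b) * c = a * c + b * c)
    (hdiv : ∀ a : S, ∀ n : ℕ, 1 ≤ n → ∃ b : S, nmul n b = a)
    (hne : (torsionSet S).Nonempty) :
    ((∀ a ∈ torsionSet S, ∀ b ∈ torsionSet S, a + b ∈ torsionSet S) ∧
     (∀ s : S, ∀ t ∈ torsionSet S, s * t ∈ torsionSet S) ∧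
     (∀ t ∈ torsionSet S, ∀ n : ℕ, 1 ≤ n → ∃ t' ∈ torsionSet S, nmul n t' = t)) ∧
    ((∀ a : S, ∀ n : ℕ, 1 ≤ n → ∃! b : S, nmul n b = a) →
      ∀ t ∈ torsionSet S, t + t = t) :=
  stmt_7_general hdl hdiv
end

section
/- Let S be an additively divisible semiring (commutative, possibly without neutral elements) and let A be a nonempty subset of S such that there exists m ≥ 1 with ord(a) ≤ m for every a ∈ A, and such that S is generated by A as an S-semimodule: the smallest subset of S containing A, closed under addition, and closed under multiplication by arbitrary elements of S, equals S. Then S is additively idempotent. -/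
/-- The set `{n·a : n ≥ 1}`; `ord a` is its cardinality. -/
def addOrbit {S : Type*} [Add S] (a : S) : Set S :=
  {x | ∃ n : ℕ, 1 ≤ n ∧ nmul n a = x}

/-- The `S`-subsemimodule generated by `A`: the smallest subset of `S` containing `A`,
closed under addition and under multiplication by arbitrary elements of `S`. -/
def modClosure {S : Type*} [Add S] [Mul S] (A : Set S) : Set S :=
  ⋂₀ {T : Set S | A ⊆ T ∧ (∀ x ∈ T, ∀ y ∈ T, x + y ∈ T) ∧ (∀ s : S, ∀ x ∈ T, s * x ∈ T)}

theorem modClosure_subset {S : Type*} [Add S] [Mul S] {A T : Set S} (hAT : A ⊆ T)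
    (hadd : ∀ x ∈ T, ∀ y ∈ T, x + y ∈ T) (hmul : ∀ s : S, ∀ x ∈ T, s * x ∈ T) :
    modClosure A ⊆ T :=
  Set.sInter_subset_of_mem ⟨hAT, hadd, hmul⟩

section AddCommSemigroup

variable {S : Type*} [AddCommSemigroup S]

theorem nmul_one (a : S) : nmul 1 a = a := rfl

theorem nmul_succ {n : ℕ} (hn : 1 ≤ n) (a : S) : nmul (n + 1) a = nmul n a + a := by
  obtain ⟨k, rfl⟩ := Nat.exists_eq_add_of_le hn
  rw [Nat.add_comm 1 k]
  rfl

theorem add_nmul {n k : ℕ} (hn : 1 ≤ n) (hk : 1 ≤ k) (a : S) :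
    nmul (n + k) a = nmul n a + nmul k a := by
  induction k, hk using Nat.le_induction with
  | base => rw [nmul_succ hn, nmul_one]
  | succ k hk ih =>
    rw [← Nat.add_assoc, nmul_succ (by omega), ih, nmul_succ hk, add_assoc]

theorem nmul_add (n : ℕ) (x y : S) : nmul n (x + y) = nmul n x + nmul n y := by
  induction n with
  | zero => rfl
  | succ n ih =>
    rcases Nat.eq_zero_or_pos n with rfl | hn
    · rfl
    · rw [nmul_succ hn, nmul_succ hn, nmul_succ hn, ih, add_add_add_comm]

theorem nmul_mul_left [Mul S] (hdl : ∀ a b c : S, a * (b + c) = a * b + a * c)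
    (n : ℕ) (s x : S) : nmul n (s * x) = s * nmul n x := by
  induction n with
  | zero => rfl
  | succ n ih =>
    rcases Nat.eq_zero_or_pos n with rfl | hn
    · rfl
    · rw [nmul_succ hn, nmul_succ hn, ih, hdl]

def nmulPeriodic (m p : ℕ) : Set S :=
  {x | ∀ n, m ≤ n → nmul (n + p) x = nmul n x}

theorem add_mem_nmulPeriodic {m p : ℕ} {x y : S} (hx : x ∈ nmulPeriodic m p)
    (hy : y ∈ nmulPeriodic m p) : x + y ∈ nmulPeriodic m p := fun n hn => by
  rw [nmul_add, nmul_add, hx n hn, hy n hn]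

theorem mul_mem_nmulPeriodic [Mul S] (hdl : ∀ a b c : S, a * (b + c) = a * b + a * c)
    {m p : ℕ} (s : S) {x : S} (hx : x ∈ nmulPeriodic m p) : s * x ∈ nmulPeriodic m p :=
  fun n hn => by rw [nmul_mul_left hdl, nmul_mul_left hdl, hx n hn]

theorem nmulPeriodic_mono {m m' p : ℕ} (h : m ≤ m') :
    nmulPeriodic m p ⊆ (nmulPeriodic m' p : Set S) :=
  fun _ hx n hn => hx n (h.trans hn)

theorem nmulPeriodic_subset_of_dvd {m p q : ℕ} (hpq : p ∣ q) :
    nmulPeriodic m p ⊆ (nmulPeriodic m q : Set S) := by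
  obtain ⟨k, rfl⟩ := hpq
  intro x hx
  induction k with
  | zero => intro n _; rfl
  | succ k ih =>
    intro n hn
    rw [Nat.mul_succ, ← Nat.add_assoc, hx _ (hn.trans (Nat.le_add_right _ _)), ih n hn]

theorem mem_nmulPeriodic_of_nmul_eq {i p : ℕ} (hi : 1 ≤ i) {a : S}
    (h : nmul (i + p) a = nmul i a) : a ∈ nmulPeriodic i p := by
  intro n hn
  induction n, hn using Nat.le_induction with
  | base => exact h
  | succ n hn ih =>
    rw [Nat.add_right_comm, nmul_succ (by omega), ih, nmul_succ (hi.trans hn)]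

theorem exists_nmul_add_eq {m : ℕ} {a : S} (hfin : (addOrbit a).Finite)
    (hcard : (addOrbit a).ncard ≤ m) :
    ∃ i p, 1 ≤ i ∧ i ≤ m ∧ 1 ≤ p ∧ p ≤ m ∧ nmul (i + p) a = nmul i a := by
  have hmaps : ∀ n ∈ Finset.Icc 1 (m + 1), nmul n a ∈ hfin.toFinset := fun n hn =>
    hfin.mem_toFinset.mpr ⟨n, (Finset.mem_Icc.mp hn).1, rfl⟩
  have hlt : hfin.toFinset.card < (Finset.Icc 1 (m + 1)).card := by
    rw [Nat.card_Icc, ← Set.ncard_eq_toFinset_card _ hfin]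
    omega
  obtain ⟨i, hi, j, hj, hij, heq⟩ := Finset.exists_ne_map_eq_of_card_lt_of_maps_to hlt hmaps
  rw [Finset.mem_Icc] at hi hj
  rcases lt_or_gt_of_ne hij with h | h
  · exact ⟨i, j - i, hi.1, by omega, by omega, by omega, by rw [Nat.add_sub_cancel' h.le, heq]⟩
  · exact ⟨j, i - j, hj.1, by omega, by omega, by omega, by rw [Nat.add_sub_cancel' h.le, heq]⟩

theorem mem_nmulPeriodic_factorial {m : ℕ} {a : S} (hfin : (addOrbit a).Finite)
    (hcard : (addOrbit a).ncard ≤ m) : a ∈ nmulPeriodic m m.factorial := by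
  obtain ⟨i, p, hi, him, hp, hpm, h⟩ := exists_nmul_add_eq hfin hcard
  exact nmulPeriodic_subset_of_dvd (Nat.dvd_factorial hp hpm)
    (nmulPeriodic_mono him (mem_nmulPeriodic_of_nmul_eq hi h))

theorem add_self_of_forall_mem_nmulPeriodic
    (hdiv : ∀ a : S, ∀ n : ℕ, 1 ≤ n → ∃ b : S, nmul n b = a) {m p : ℕ} (hp : 1 ≤ p)
    (hper : ∀ x : S, x ∈ nmulPeriodic m p) (a : S) : a + a = a := by
  set N := p * (m + 1)
  have hmN : m + 1 ≤ N := Nat.le_mul_of_pos_left _ hp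
  obtain ⟨b, rfl⟩ := hdiv a N (by omega)
  have hb : b ∈ nmulPeriodic N N :=
    nmulPeriodic_mono (by omega) (nmulPeriodic_subset_of_dvd (Dvd.intro _ rfl) (hper b))
  rw [← add_nmul (by omega) (by omega), hb N le_rfl]

end AddCommSemigroup

theorem stmt_8_general {S : Type*} [AddCommSemigroup S] [CommSemigroup S]
    (hdl : ∀ a b c : S, a * (b + c) = a * b + a * c)
    (hdiv : ∀ a : S, ∀ n : ℕ, 1 ≤ n → ∃ b : S, nmul n b = a)
    (A : Set S) (m : ℕ)
    (hbound : ∀ a ∈ A, (addOrbit a).Finite ∧ (addOrbit a).ncard ≤ m)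
    (hgen : modClosure A = Set.univ) :
    ∀ a : S, a + a = a := by
  have hA : A ⊆ nmulPeriodic m m.factorial := fun a ha =>
    mem_nmulPeriodic_factorial (hbound a ha).1 (hbound a ha).2
  have hall : modClosure A ⊆ nmulPeriodic m m.factorial :=
    modClosure_subset hA (fun _ hx _ hy => add_mem_nmulPeriodic hx hy)
      (fun s _ hx => mul_mem_nmulPeriodic hdl s hx)
  rw [hgen] at hall
  exact add_self_of_forall_mem_nmulPeriodic hdiv m.factorial_pos fun x => hall trivial

theorem stmt_8 {S : Type*} [AddCommSemigroup S] [CommSemigroup S]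
    (hdl : ∀ a b c : S, a * (b + c) = a * b + a * c)
    (hdr : ∀ a b c : S, (a + b) * c = a * c + b * c)
    (hdiv : ∀ a : S, ∀ n : ℕ, 1 ≤ n → ∃ b : S, nmul n b = a)
    (A : Set S) (hA : A.Nonempty) (m : ℕ) (hm : 1 ≤ m)
    (hbound : ∀ a ∈ A, (addOrbit a).Finite ∧ (addOrbit a).ncard ≤ m)
    (hgen : modClosure A = Set.univ) :
    ∀ a : S, a + a = a :=
  stmt_8_general hdl hdiv A m hbound hgen
end
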